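/- arXiv:2209.13098 — 2 statements merged into one kernel-verified Lean document; each statement's English description precedes it below -/
import Mathlib

section
/- Let F : ℝ² → ℝ² be a continuous vector field and V : ℝ² → ℝ a continuously differentiable function solving the Hamilton–Jacobi equation ⟨∇V(x), F(x)⟩ + ½⟨∇V(x), ∇V(x)⟩ = 0 for all x. Let c ∈ ℝ and consider the controlled vector field F_c(x) := F(x) + c∇V(x). Then the function W := (1 − 2c)V solves the Hamilton–Jacobi equation for the controlled field: ⟨∇W(x), F_c(x)⟩ + ½⟨∇W(x), ∇W(x)⟩ = 0 for all x. Moreover the controlled field admits the orthogonal decomposition F_c(x) = −½(1 − 2c)∇V(x) + l(x) with the same rotational component l(x) = F(x) + ½∇V(x), which satisfies ⟨l(x), ∇V(x)⟩ = 0. -/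
open scoped RealInnerProductSpace

/-!
Writing `g = ∇V(x)` and `f = F(x)`, the gradient of `W = (1 - 2c)V` is `(1 - 2c)g`, and
`⟪(1 - 2c)g, f + cg⟫ + ½‖(1 - 2c)g‖² = (1 - 2c)(⟪g, f⟫ + ½‖g‖²)` because
`c + ½(1 - 2c) = ½`. The same Hamilton–Jacobi expression `⟪g, f⟫ + ½‖g‖²` is `⟪f + ½g, g⟫`,
which gives the orthogonality of the rotational component.
-/

variable {E : Type*} [NormedAddCommGroup E] [InnerProductSpace ℝ E] [CompleteSpace E]

theorem gradient_const_mul {f : E → ℝ} {x : E} (hf : DifferentiableAt ℝ f x) (a : ℝ) :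
    gradient (fun y => a * f y) x = a • gradient f x := by
  simp only [gradient, fderiv_const_mul hf, map_smul]

def SolvesHamiltonJacobi (G : E → E) (W : E → ℝ) : Prop :=
  ∀ x, ⟪gradient W x, G x⟫ + (1 / 2) * ⟪gradient W x, gradient W x⟫ = 0

namespace SolvesHamiltonJacobi

variable {F : E → E} {V : E → ℝ}

theorem add_const_smul_gradient (hHJ : SolvesHamiltonJacobi F V) (hV : Differentiable ℝ V)
    (c : ℝ) :
    SolvesHamiltonJacobi (fun x => F x + c • gradient V x) (fun x => (1 - 2 * c) * V x) := by
  intro x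
  rw [gradient_const_mul (hV x)]
  simp only [real_inner_smul_left, real_inner_smul_right, inner_add_right]
  linear_combination (1 - 2 * c) * hHJ x

theorem inner_add_half_smul_gradient_eq_zero (hHJ : SolvesHamiltonJacobi F V) (x : E) :
    ⟪F x + (1 / 2 : ℝ) • gradient V x, gradient V x⟫ = 0 := by
  rw [inner_add_left, real_inner_smul_left, real_inner_comm]
  exact hHJ x

end SolvesHamiltonJacobi

theorem controlled_field_quasipotential_general
    (F : EuclideanSpace ℝ (Fin 2) → EuclideanSpace ℝ (Fin 2))
    (V : EuclideanSpace ℝ (Fin 2) → ℝ) (hV : ContDiff ℝ 1 V)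
    (hHJ : ∀ x, ⟪gradient V x, F x⟫ + (1 / 2) * ⟪gradient V x, gradient V x⟫ = 0)
    (c : ℝ)
    (Fc : EuclideanSpace ℝ (Fin 2) → EuclideanSpace ℝ (Fin 2))
    (hFc : Fc = fun x => F x + c • gradient V x)
    (W : EuclideanSpace ℝ (Fin 2) → ℝ) (hW : W = fun x => (1 - 2 * c) * V x)
    (l : EuclideanSpace ℝ (Fin 2) → EuclideanSpace ℝ (Fin 2))
    (hl : l = fun x => F x + (1 / 2 : ℝ) • gradient V x) :
    (∀ x, ⟪gradient W x, Fc x⟫ + (1 / 2) * ⟪gradient W x, gradient W x⟫ = 0) ∧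
    (∀ x, Fc x = -(((1 / 2) * (1 - 2 * c)) • gradient V x) + l x) ∧
    (∀ x, ⟪l x, gradient V x⟫ = 0) := by
  have hHJ : SolvesHamiltonJacobi F V := hHJ
  subst hFc hW hl
  exact ⟨hHJ.add_const_smul_gradient (hV.differentiable one_ne_zero) c, fun x => by module,
    hHJ.inner_add_half_smul_gradient_eq_zero⟩

/-- Under the control `u = c∇V`, the controlled field `F_c = F + c∇V` has quasipotential
`W = (1 − 2c)V`: `W` solves the Hamilton–Jacobi equation for `F_c`, and `F_c` admits the
orthogonal decomposition `F_c = −½(1 − 2c)∇V + l` with the same rotational component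
`l = F + ½∇V`, which is orthogonal to `∇V`. -/
theorem controlled_field_quasipotential
    (F : EuclideanSpace ℝ (Fin 2) → EuclideanSpace ℝ (Fin 2)) (hF : Continuous F)
    (V : EuclideanSpace ℝ (Fin 2) → ℝ) (hV : ContDiff ℝ 1 V)
    (hHJ : ∀ x, ⟪gradient V x, F x⟫ + (1 / 2) * ⟪gradient V x, gradient V x⟫ = 0)
    (c : ℝ)
    (Fc : EuclideanSpace ℝ (Fin 2) → EuclideanSpace ℝ (Fin 2))
    (hFc : Fc = fun x => F x + c • gradient V x)
    (W : EuclideanSpace ℝ (Fin 2) → ℝ) (hW : W = fun x => (1 - 2 * c) * V x)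
    (l : EuclideanSpace ℝ (Fin 2) → EuclideanSpace ℝ (Fin 2))
    (hl : l = fun x => F x + (1 / 2 : ℝ) • gradient V x) :
    (∀ x, ⟪gradient W x, Fc x⟫ + (1 / 2) * ⟪gradient W x, gradient W x⟫ = 0) ∧
    (∀ x, Fc x = -(((1 / 2) * (1 - 2 * c)) • gradient V x) + l x) ∧
    (∀ x, ⟪l x, gradient V x⟫ = 0) :=
  controlled_field_quasipotential_general F V hV hHJ c Fc hFc W hW l hl
end

section
/- Let F : ℝ² → ℝ² be the Maier–Stein vector field with parameter γ = 1, i.e., F(x₁, x₂) = (x₁ − x₁³ − x₁ x₂², −(1 + x₁²) x₂), and define V : ℝ² → ℝ by V(x₁, x₂) = ½[(x₁² − 1)² + 2x₂²(x₁² + 1)]. Then V solves the Hamilton–Jacobi equation ⟨∇V(x), F(x)⟩ + ½⟨∇V(x), ∇V(x)⟩ = 0 for all x ∈ ℝ², and V(−1, 0) = V(1, 0) = 0. That is, the quasipotential of the Maier–Stein system with γ = 1 is exactly twice its potential function U(x₁, x₂) = ¼[(x₁² − 1)² + 2x₂²(x₁² + 1)]. -/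
/-
For `γ = 1` the Maier–Stein field is a gradient field: `F = -∇U` with
`U = ¼[(x₁² − 1)² + 2x₂²(x₁² + 1)]`. Whenever `F = -½∇V`, the Hamilton–Jacobi expression
`⟪∇V, F⟫ + ½⟪∇V, ∇V⟫ = ⟪∇V, -½∇V⟫ + ½⟪∇V, ∇V⟫` vanishes; here `V = 2U`.
-/

open scoped RealInnerProductSpace

theorem inner_add_half_inner_self_eq_zero_of_eq_neg_two_smul {E : Type*} [NormedAddCommGroup E]
    [InnerProductSpace ℝ E] {g f : E} (h : g = -(2 : ℝ) • f) :
    ⟪g, f⟫ + (1 / 2) * ⟪g, g⟫ = 0 := by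
  subst h
  simp only [inner_smul_left, inner_smul_right, RCLike.conj_to_real]
  ring

theorem EuclideanSpace.hasGradientAt_of_hasFDerivAt {ι : Type*} [Fintype ι] [DecidableEq ι]
    {f : EuclideanSpace ℝ ι → ℝ} {L : EuclideanSpace ℝ ι →L[ℝ] ℝ} {g x : EuclideanSpace ℝ ι}
    (hf : HasFDerivAt f L x) (hL : ∀ i, L (EuclideanSpace.single i 1) = g i) :
    HasGradientAt f g x := by
  suffices InnerProductSpace.toDual ℝ _ g = L by rwa [hasGradientAt_iff_hasFDerivAt, this]
  refine ContinuousLinearMap.coe_injective <|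
    (EuclideanSpace.basisFun ι ℝ).toBasis.ext fun i => ?_
  simp [hL, InnerProductSpace.toDual_apply_apply, EuclideanSpace.inner_single_right]

noncomputable def maierSteinField (γ : ℝ) (x : EuclideanSpace ℝ (Fin 2)) :
    EuclideanSpace ℝ (Fin 2) :=
  !₂[x 0 - x 0 ^ 3 - γ * x 0 * x 1 ^ 2, -(1 + x 0 ^ 2) * x 1]

theorem hasGradientAt_maierStein_one (x : EuclideanSpace ℝ (Fin 2)) :
    HasGradientAt (fun x : EuclideanSpace ℝ (Fin 2) =>
      (1 / 2) * ((x 0 ^ 2 - 1) ^ 2 + 2 * x 1 ^ 2 * (x 0 ^ 2 + 1)))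
      (-(2 : ℝ) • maierSteinField 1 x) x := by
  have h0 := (EuclideanSpace.proj (𝕜 := ℝ) (0 : Fin 2)).hasFDerivAt (x := x)
  have h1 := (EuclideanSpace.proj (𝕜 := ℝ) (1 : Fin 2)).hasFDerivAt (x := x)
  refine EuclideanSpace.hasGradientAt_of_hasFDerivAt
    ((((h0.pow 2).sub_const 1).pow 2).add (((h1.pow 2).const_mul 2).mul ((h0.pow 2).add_const 1))
      |>.const_mul (1 / 2)) fun i => ?_
  fin_cases i <;>
  · simp only [maierSteinField, Fin.isValue, Fin.zero_eta, Fin.mk_one, PiLp.proj_apply,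
      PiLp.single_eq_same, PiLp.single_eq_of_ne, ne_eq, zero_ne_one, one_ne_zero,
      not_false_eq_true, add_apply, smul_apply, nsmul_eq_mul, smul_eq_mul, PiLp.smul_apply,
      Matrix.cons_val_zero, Matrix.cons_val_one, Matrix.cons_val_fin_one]
    ring

/-- For `γ = 1` the quasipotential of the Maier–Stein system is exactly twice its
potential function: `V(x₁, x₂) = ½[(x₁² − 1)² + 2x₂²(x₁² + 1)]` solves the
Hamilton–Jacobi equation `⟨∇V, F⟩ + ½⟨∇V, ∇V⟩ = 0` and vanishes at the stable fixed
points `(−1, 0)` and `(1, 0)`. -/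
theorem maier_stein_quasipotential_gamma_one
    (F : EuclideanSpace ℝ (Fin 2) → EuclideanSpace ℝ (Fin 2))
    (hF : ∀ x : EuclideanSpace ℝ (Fin 2),
      F x 0 = x 0 - (x 0) ^ 3 - x 0 * (x 1) ^ 2 ∧ F x 1 = -(1 + (x 0) ^ 2) * x 1)
    (V : EuclideanSpace ℝ (Fin 2) → ℝ)
    (hV : V = fun x => (1 / 2) * (((x 0) ^ 2 - 1) ^ 2 + 2 * (x 1) ^ 2 * ((x 0) ^ 2 + 1))) :
    (∀ x, ⟪gradient V x, F x⟫ + (1 / 2) * ⟪gradient V x, gradient V x⟫ = 0) ∧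
    V ((EuclideanSpace.equiv (Fin 2) ℝ).symm ![-1, 0]) = 0 ∧
    V ((EuclideanSpace.equiv (Fin 2) ℝ).symm ![1, 0]) = 0 := by
  have hF_eq : F = maierSteinField 1 := funext fun x => by
    ext i
    fin_cases i <;> simp [maierSteinField, hF]
  subst hF_eq hV
  exact ⟨fun x => inner_add_half_inner_self_eq_zero_of_eq_neg_two_smul
    (hasGradientAt_maierStein_one x).gradient, by norm_num, by norm_num⟩
end
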